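/- Let x^(1), ..., x^(n) ∈ X, Θ* with R(Θ*) ≤ r, Φ with R*(Φ(x)) ≤ d on X, Φ̄ the centered statistic, and Δ ∈ 4Λ = {M : R(M) ≤ 4r}. Define the Taylor residual δL_n(Δ, Θ*) = L_n(Θ*+Δ) − L_n(Θ*) − ⟨⟨∇L_n(Θ*), Δ⟩⟩, where L_n(Θ) = (1/n)Σ_t exp(−⟨⟨Θ, Φ̄(x^(t))⟩⟩). Then δL_n(Δ, Θ*) ≥ (exp(−2rd)/(2+8rd)) · (1/n) Σ_{t=1}^n ⟨⟨Δ, Φ̄(x^(t))⟩⟩². -/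

import Mathlib

open scoped BigOperators
open MeasureTheory

/-- The Frobenius inner product `⟨⟨A,B⟩⟩ = Σ_{ij} A_{ij} B_{ij}`. -/
def frobInner {k1 k2 : ℕ} (A B : Matrix (Fin k1) (Fin k2) ℝ) : ℝ :=
  ∑ i : Fin k1, ∑ j : Fin k2, A i j * B i j

/-- The dual norm `R*(N) = sup {⟨⟨M,N⟩⟩ : R(M) ≤ 1}`. -/
noncomputable def dualNorm {k1 k2 : ℕ} (R : Matrix (Fin k1) (Fin k2) ℝ → ℝ)
    (N : Matrix (Fin k1) (Fin k2) ℝ) : ℝ :=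
  sSup {c | ∃ M : Matrix (Fin k1) (Fin k2) ℝ, R M ≤ 1 ∧ c = frobInner M N}

/-- The mean of the natural statistic `Φ` under the uniform distribution on `X`. -/
noncomputable def uniformMean {p k1 k2 : ℕ} (X : Set (Fin p → ℝ))
    (Φ : (Fin p → ℝ) → Matrix (Fin k1) (Fin k2) ℝ) : Matrix (Fin k1) (Fin k2) ℝ :=
  fun u v => (volume X).toReal⁻¹ * ∫ y in X, Φ y u v

/-- The empirical loss `L_n(Θ) = (1/n) Σ_t exp(−⟨⟨Θ, Φ̄(x^{(t)})⟩⟩)` with the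
centered statistic `Φ̄ = Φ − E_{U_X}[Φ]`. -/
noncomputable def empLoss {p k1 k2 n : ℕ} (X : Set (Fin p → ℝ))
    (Φ : (Fin p → ℝ) → Matrix (Fin k1) (Fin k2) ℝ)
    (xs : Fin n → (Fin p → ℝ)) (Θ : Matrix (Fin k1) (Fin k2) ℝ) : ℝ :=
  (n : ℝ)⁻¹ * ∑ t : Fin n, Real.exp (-(frobInner Θ (Φ (xs t) - uniformMean X Φ)))


-- scalar lemma part 1: exp(-y) ≤ 1 - y + y^2/2 for y ≥ 0
lemma exp_neg_le_quad {y : ℝ} (hy : 0 ≤ y) : Real.exp (-y) ≤ 1 - y + y^2/2 := by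
  have h1 : Real.exp (-y) * Real.exp y = 1 := by rw [← Real.exp_add]; simp
  have h2 : 1 + y + y^2/2 ≤ Real.exp y := Real.quadratic_le_exp_of_nonneg hy
  have h3 : (0:ℝ) < Real.exp y := Real.exp_pos y
  have h4 : (0:ℝ) ≤ Real.exp (-y) := (Real.exp_pos _).le
  nlinarith [sq_nonneg (y^2), sq_nonneg y, mul_le_mul_of_nonneg_left h2 h4]

lemma cubic_le_exp_neg {y : ℝ} (hy : 0 ≤ y) : 1 - y + y^2/2 - y^3/6 ≤ Real.exp (-y) := by
  set f : ℝ → ℝ := fun x => Real.exp (-x) - (1 - x + x^2/2 - x^3/6) with hf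
  have hd : ∀ x : ℝ, HasDerivAt f (-Real.exp (-x) - (-1 + x - x^2/2)) x := by
    intro x
    have h1 : HasDerivAt (fun x : ℝ => Real.exp (-x)) (-Real.exp (-x)) x := by
      exact ((Real.hasDerivAt_exp (-x)).comp x (hasDerivAt_neg x)).congr_deriv (by simp)
    have h2 : HasDerivAt (fun x : ℝ => 1 - x + x^2/2 - x^3/6) (-1 + x - x^2/2) x := by
      have := (((hasDerivAt_pow 2 x).div_const 2)).const_add (1 - x)
      have h3 : HasDerivAt (fun x : ℝ => 1 - x + x^2/2 - x^3/6)
          (0 - 1 + (2*x^1)/2 - (3*x^2)/6) x := by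
        exact ((((hasDerivAt_const x (1:ℝ)).sub (hasDerivAt_id x)).add
          ((hasDerivAt_pow 2 x).div_const 2)).sub ((hasDerivAt_pow 3 x).div_const 6))
      convert h3 using 1; ring
    exact h1.sub h2
  have hmono : MonotoneOn f (Set.Ici (0:ℝ)) := by
    apply monotoneOn_of_deriv_nonneg (convex_Ici 0)
    · exact (Continuous.continuousOn (by continuity))
    · intro x hx
      exact (hd x).differentiableAt.differentiableWithinAt
    · intro x hx
      rw [(hd x).deriv]
      have hx0 : (0:ℝ) ≤ x := le_of_lt (by simpa using hx)
      have := exp_neg_le_quad hx0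
      nlinarith
  have h0 : f 0 ≤ f y := hmono (by simp) (by simpa using hy) hy
  simp only [hf] at h0
  norm_num at h0
  linarith

lemma exp_taylor_residual_lb (z : ℝ) : z^2 / (2 + |z|) ≤ Real.exp (-z) - 1 + z := by
  have hden : (0:ℝ) < 2 + |z| := by positivity
  rw [div_le_iff₀ hden]
  rcases le_or_gt z 0 with hz | hz
  · -- z ≤ 0
    rw [abs_of_nonpos hz]
    have hy : (0:ℝ) ≤ -z := by linarith
    have h4 : ∑ i ∈ Finset.range 4, (-z) ^ i / (i.factorial : ℝ) ≤ Real.exp (-z) :=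
      Real.sum_le_exp_of_nonneg hy 4
    have hsum : ∑ i ∈ Finset.range 4, (-z) ^ i / (i.factorial : ℝ)
        = 1 + (-z) + z^2/2 + (-z)^3/6 := by
      rw [Finset.sum_range_succ, Finset.sum_range_succ, Finset.sum_range_succ,
        Finset.sum_range_succ, Finset.sum_range_zero]
      norm_num [Nat.factorial]
    rw [hsum] at h4
    nlinarith [sq_nonneg z, mul_nonneg hy (sq_nonneg z)]
  · rw [abs_of_pos hz]
    rcases le_or_gt z 2 with hz2 | hz2
    · -- 0 < z ≤ 2
      have hq := cubic_le_exp_neg (by linarith : (0:ℝ) ≤ z/2)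
      set q : ℝ := 1 - z/2 + (z/2)^2/2 - (z/2)^3/6 with hqdef
      have hq0 : 0 ≤ q := by rw [hqdef]; nlinarith [sq_nonneg z, mul_nonneg hz.le (sub_nonneg.2 hz2)]
      have hsq : q^2 ≤ Real.exp (-z) := by
        have hmul : Real.exp (-(z/2)) * Real.exp (-(z/2)) = Real.exp (-z) := by
          rw [← Real.exp_add]; ring_nf
        calc q^2 = q * q := sq q
        _ ≤ Real.exp (-(z/2)) * Real.exp (-(z/2)) := mul_le_mul hq hq hq0 (Real.exp_pos _).le
        _ = Real.exp (-z) := hmul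
      have hQ : 0 ≤ 1/6 - 3*z/32 + 5*z^2/192 - 5*z^3/1152 + z^4/2304 := by
        nlinarith [sq_nonneg z, sq_nonneg (z-2), mul_nonneg hz.le (sub_nonneg.2 hz2),
          mul_nonneg (mul_nonneg hz.le hz.le) (sub_nonneg.2 hz2),
          mul_nonneg (mul_nonneg hz.le hz.le) (mul_nonneg hz.le (sub_nonneg.2 hz2))]
      have hkey : (q^2 - 1 + z) * (2 + z) - z^2
          = z^3 * (1/6 - 3*z/32 + 5*z^2/192 - 5*z^3/1152 + z^4/2304) := by
        rw [hqdef]; ring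
      have hz3 : 0 ≤ z^3 := by positivity
      have h1 : q^2*(2+z) ≤ Real.exp (-z) * (2+z) :=
        mul_le_mul_of_nonneg_right hsq (by linarith)
      have h2 : (Real.exp (-z) - 1 + z)*(2+z)
          = Real.exp (-z)*(2+z) - (1-z)*(2+z) := by ring
      have h3 : q^2*(2+z) - (1-z)*(2+z) - z^2
          = z^3 * (1/6 - 3*z/32 + 5*z^2/192 - 5*z^3/1152 + z^4/2304) := by
        rw [hqdef]; ring
      clear_value q
      nlinarith [mul_nonneg hz3 hQ]
    · -- z > 2
      have := Real.exp_pos (-z)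
      nlinarith

lemma entry_bound {k1 k2 : ℕ} (R : Matrix (Fin k1) (Fin k2) ℝ → ℝ)
    (hR_nonneg : ∀ M, 0 ≤ R M)
    (hR_add : ∀ M N, R (M + N) ≤ R M + R N)
    (hR_smul : ∀ (c : ℝ) (M), R (c • M) = |c| * R M)
    (hR_eq_zero : ∀ M, R M = 0 → M = 0) :
    ∃ C : ℝ, 0 < C ∧ ∀ (M : Matrix (Fin k1) (Fin k2) ℝ) (u : Fin k1) (v : Fin k2),
      |M u v| ≤ C * R M := by
  have hR0 : R 0 = 0 := by simpa using hR_smul 0 0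
  rcases isEmpty_or_nonempty (Fin k1) with hk1 | hk1
  · exact ⟨1, one_pos, fun M u v => (IsEmpty.false u).elim⟩
  rcases isEmpty_or_nonempty (Fin k2) with hk2 | hk2
  · exact ⟨1, one_pos, fun M u v => (IsEmpty.false v).elim⟩
  -- subadditivity over finite sums
  have hsum_le : ∀ {ι : Type} (s : Finset ι) (A : ι → Matrix (Fin k1) (Fin k2) ℝ),
      R (∑ i ∈ s, A i) ≤ ∑ i ∈ s, R (A i) := by
    intro ι s A
    induction s using Finset.cons_induction with
    | empty => simp [hR0]
    | cons a s ha ih =>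
      rw [Finset.sum_cons, Finset.sum_cons]
      exact le_trans (hR_add _ _) (by linarith)
  -- R M ≤ K * sup-entry bound
  set K : ℝ := ∑ u : Fin k1, ∑ v : Fin k2, R (Matrix.single u v 1) with hK
  have hKnn : 0 ≤ K := Finset.sum_nonneg fun u _ => Finset.sum_nonneg fun v _ => hR_nonneg _
  set V := (Fin k1 → Fin k2 → ℝ) with hV
  let R' : V → ℝ := fun f => R (Matrix.of f)
  have hRle : ∀ M : Matrix (Fin k1) (Fin k2) ℝ, ∀ b : ℝ, 0 ≤ b →
      (∀ u v, |M u v| ≤ b) → R M ≤ K * b := by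
    intro M b hb hMb
    have h1 : R M ≤ ∑ u : Fin k1, ∑ v : Fin k2, R (M u v • Matrix.single u v 1) := by
      calc R M = R (∑ u : Fin k1, ∑ v : Fin k2, M u v • Matrix.single u v 1) := by
            congr 1
            conv_lhs => rw [Matrix.matrix_eq_sum_single M]
            refine Finset.sum_congr rfl fun u _ => Finset.sum_congr rfl fun v _ => ?_
            rw [Matrix.smul_single, smul_eq_mul, mul_one]
        _ ≤ ∑ u : Fin k1, R (∑ v : Fin k2, M u v • Matrix.single u v 1) :=
            hsum_le _ _
        _ ≤ _ := Finset.sum_le_sum fun u _ => hsum_le _ _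
    rw [hK, Finset.sum_mul]
    refine le_trans h1 (Finset.sum_le_sum fun u _ => ?_)
    rw [Finset.sum_mul]
    refine Finset.sum_le_sum fun v _ => ?_
    rw [hR_smul]
    rw [mul_comm (R (Matrix.single u v 1)) b]
    exact mul_le_mul (hMb u v) le_rfl (hR_nonneg _) hb
  -- continuity of R'
  have hcont : Continuous R' := by
    rw [Metric.continuous_iff]
    intro f ε hε
    rcases lt_or_ge K 0 with h | hKpos
    · exact absurd h (not_lt.2 hKnn)
    refine ⟨ε / (K + 1), by positivity, fun g hg => ?_⟩
    have hRdiff : ∀ f g : V, R' g - R' f ≤ R (Matrix.of (g - f)) := by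
      intro f g
      have : R (Matrix.of g) ≤ R (Matrix.of f) + R (Matrix.of (g - f)) := by
        have h := hR_add (Matrix.of f) (Matrix.of (g - f))
        have he : Matrix.of f + Matrix.of (g - f) = Matrix.of g := by
          ext u v
          show f u v + (g u v - f u v) = g u v
          ring
        rw [he] at h
        linarith
      show R (Matrix.of g) - R (Matrix.of f) ≤ R (Matrix.of (g - f))
      linarith [this]
    have hdb : ∀ f g : V, R (Matrix.of (g - f)) ≤ K * dist g f := by
      intro f g
      refine hRle _ _ dist_nonneg fun u v => ?_
      have h1 : ‖(g - f) u v‖ ≤ ‖(g - f) u‖ := norm_le_pi_norm ((g-f) u) v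
      have h2 : ‖(g - f) u‖ ≤ ‖g - f‖ := norm_le_pi_norm (g-f) u
      calc |(Matrix.of (g - f)) u v| = ‖(g - f) u v‖ := rfl
        _ ≤ ‖g - f‖ := le_trans h1 h2
        _ = dist g f := (dist_eq_norm g f).symm
    have hgf : dist (R' g) (R' f) ≤ K * dist g f := by
      rw [Real.dist_eq, abs_le]
      constructor
      · have := hRdiff g f
        have h2 := hdb g f
        have : R' f - R' g ≤ K * dist f g := le_trans this h2
        rw [dist_comm f g] at this
        linarith
      · exact le_trans (hRdiff f g) (hdb f g)
    calc dist (R' g) (R' f) ≤ K * dist g f := hgf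
      _ ≤ K * (ε / (K + 1)) := by
          exact mul_le_mul_of_nonneg_left (le_of_lt hg) hKnn
      _ < ε := by
          rw [mul_div_assoc']
          rw [div_lt_iff₀ (by linarith)]
          nlinarith
  -- compact sphere, min of R'
  haveI : Nontrivial V :=
    ⟨(fun _ _ => 0), (fun _ _ => 1),
      fun h => one_ne_zero (congrFun (congrFun h.symm hk1.some) hk2.some)⟩
  have hsphne : (Metric.sphere (0:V) 1).Nonempty :=
    NormedSpace.sphere_nonempty.2 zero_le_one
  obtain ⟨f0, hf0mem, hf0min⟩ :=
    (isCompact_sphere (0:V) 1).exists_isMinOn hsphne hcont.continuousOn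
  have hf0norm : ‖f0‖ = 1 := by simpa using mem_sphere_zero_iff_norm.1 hf0mem
  set m : ℝ := R' f0 with hm
  have hmpos : 0 < m := by
    rcases lt_or_eq_of_le (hR_nonneg (Matrix.of f0)) with h | h
    · exact h
    · exfalso
      have hf00 : Matrix.of f0 = 0 := hR_eq_zero _ h.symm
      have hz : f0 = 0 := by
        ext u v; exact congrFun (congrFun hf00 u) v
      rw [hz] at hf0norm
      simp at hf0norm
  have hlower : ∀ f : V, m * ‖f‖ ≤ R' f := by
    intro f
    rcases eq_or_ne f 0 with rfl | hf
    · have h0 : Matrix.of (0:V) = 0 := by ext u v; rfl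
      show m * ‖(0:V)‖ ≤ R (Matrix.of (0:V))
      rw [h0, hR0]
      simp
    · have hfn : 0 < ‖f‖ := norm_pos_iff.2 hf
      set g : V := ‖f‖⁻¹ • f with hg
      have hgn : ‖g‖ = 1 := by
        rw [hg, norm_smul, norm_inv, norm_norm, inv_mul_cancel₀ (ne_of_gt hfn)]
      have hgmem : g ∈ Metric.sphere (0:V) 1 := by
        simp [mem_sphere_zero_iff_norm, hgn]
      have h1 : m ≤ R' g := hf0min hgmem
      have h2 : R' g = ‖f‖⁻¹ * R' f := by
        have he : Matrix.of g = ‖f‖⁻¹ • Matrix.of f := by ext u v; rfl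
        show R (Matrix.of g) = ‖f‖⁻¹ * R (Matrix.of f)
        rw [he, hR_smul, abs_of_pos (inv_pos.2 hfn)]
      rw [h2] at h1
      calc m * ‖f‖ ≤ ‖f‖⁻¹ * R' f * ‖f‖ := mul_le_mul_of_nonneg_right h1 (le_of_lt hfn)
        _ = R' f := by field_simp
  refine ⟨m⁻¹, inv_pos.2 hmpos, fun M u v => ?_⟩
  have h3 : R' (fun u v => M u v : V) = R M := by
    show R (Matrix.of (fun u v => M u v : V)) = R M
    congr 1
  have h1 : |M u v| ≤ ‖(fun u v => M u v : V)‖ :=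
    le_trans (norm_le_pi_norm ((fun u v => M u v : V) u) v)
      (norm_le_pi_norm (fun u v => M u v : V) u)
  have h2 := hlower (fun u v => M u v : V)
  rw [h3] at h2
  rw [show m⁻¹ * R M = m⁻¹ * R M from rfl]
  have h4 : ‖(fun u v => M u v : V)‖ ≤ m⁻¹ * R M := by
    rw [← mul_le_mul_iff_right₀ hmpos, ← mul_assoc, mul_inv_cancel₀ (ne_of_gt hmpos), one_mul]
    exact h2
  exact le_trans h1 h4

lemma frobInner_add_left {k1 k2 : ℕ} (A B N : Matrix (Fin k1) (Fin k2) ℝ) :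
    frobInner (A + B) N = frobInner A N + frobInner B N := by
  simp [frobInner, Matrix.add_apply, add_mul, Finset.sum_add_distrib]

lemma frobInner_neg_left {k1 k2 : ℕ} (A N : Matrix (Fin k1) (Fin k2) ℝ) :
    frobInner (-A) N = -frobInner A N := by
  simp [frobInner, Matrix.neg_apply]

lemma frobInner_sub_right {k1 k2 : ℕ} (M A B : Matrix (Fin k1) (Fin k2) ℝ) :
    frobInner M (A - B) = frobInner M A - frobInner M B := by
  simp [frobInner, Matrix.sub_apply, mul_sub, Finset.sum_sub_distrib]

lemma frobInner_smul_left {k1 k2 : ℕ} (c : ℝ) (A N : Matrix (Fin k1) (Fin k2) ℝ) :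
    frobInner (c • A) N = c * frobInner A N := by
  simp [frobInner, Matrix.smul_apply, smul_eq_mul, Finset.mul_sum, mul_assoc]

lemma frobInner_zero_left {k1 k2 : ℕ} (N : Matrix (Fin k1) (Fin k2) ℝ) :
    frobInner 0 N = 0 := by
  simp [frobInner]

lemma abs_frobInner_le_dual {k1 k2 : ℕ} (R : Matrix (Fin k1) (Fin k2) ℝ → ℝ)
    (hR_nonneg : ∀ M, 0 ≤ R M)
    (hR_add : ∀ M N, R (M + N) ≤ R M + R N)
    (hR_smul : ∀ (c : ℝ) (M), R (c • M) = |c| * R M)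
    (hR_eq_zero : ∀ M, R M = 0 → M = 0)
    (M N : Matrix (Fin k1) (Fin k2) ℝ) :
    |frobInner M N| ≤ R M * dualNorm R N := by
  have hR0 : R 0 = 0 := by simpa using hR_smul 0 0
  obtain ⟨C, hC, hCb⟩ := entry_bound R hR_nonneg hR_add hR_smul hR_eq_zero
  have hbdd : BddAbove {c | ∃ M : Matrix (Fin k1) (Fin k2) ℝ, R M ≤ 1 ∧ c = frobInner M N} := by
    refine ⟨∑ u : Fin k1, ∑ v : Fin k2, C * |N u v|, fun c hc => ?_⟩
    obtain ⟨M, hM1, rfl⟩ := hc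
    calc frobInner M N ≤ ∑ u : Fin k1, ∑ v : Fin k2, |M u v * N u v| :=
          Finset.sum_le_sum fun u _ => Finset.sum_le_sum fun v _ => le_abs_self _
      _ ≤ ∑ u : Fin k1, ∑ v : Fin k2, C * |N u v| := by
          refine Finset.sum_le_sum fun u _ => Finset.sum_le_sum fun v _ => ?_
          rw [abs_mul]
          refine mul_le_mul ?_ le_rfl (abs_nonneg _) (le_of_lt hC)
          calc |M u v| ≤ C * R M := hCb M u v
            _ ≤ C * 1 := mul_le_mul_of_nonneg_left hM1 (le_of_lt hC)
            _ = C := mul_one C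
  have hmem0 : (0:ℝ) ∈ {c | ∃ M : Matrix (Fin k1) (Fin k2) ℝ, R M ≤ 1 ∧ c = frobInner M N} :=
    ⟨0, by rw [hR0]; exact zero_le_one, (frobInner_zero_left N).symm⟩
  have hdual0 : 0 ≤ dualNorm R N := le_csSup hbdd hmem0
  have hpair : ∀ M' : Matrix (Fin k1) (Fin k2) ℝ, frobInner M' N ≤ R M' * dualNorm R N := by
    intro M'
    rcases eq_or_lt_of_le (hR_nonneg M') with h0 | hpos
    · have hM0 : M' = 0 := hR_eq_zero _ h0.symm
      rw [hM0, frobInner_zero_left, hR0, zero_mul]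
    · have hmem : frobInner ((R M')⁻¹ • M') N ∈
          {c | ∃ M : Matrix (Fin k1) (Fin k2) ℝ, R M ≤ 1 ∧ c = frobInner M N} := by
        refine ⟨(R M')⁻¹ • M', ?_, rfl⟩
        rw [hR_smul, abs_of_pos (inv_pos.2 hpos), inv_mul_cancel₀ (ne_of_gt hpos)]
      have h1 : frobInner ((R M')⁻¹ • M') N ≤ dualNorm R N := le_csSup hbdd hmem
      rw [frobInner_smul_left] at h1
      calc frobInner M' N = R M' * ((R M')⁻¹ * frobInner M' N) := by
            field_simp
        _ ≤ R M' * dualNorm R N := mul_le_mul_of_nonneg_left h1 (le_of_lt hpos)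
  rw [abs_le]
  refine ⟨?_, hpair M⟩
  have h2 := hpair (-M)
  rw [frobInner_neg_left] at h2
  have hRM : R (-M) = R M := by
    have : (-M : Matrix (Fin k1) (Fin k2) ℝ) = (-1 : ℝ) • M := by ext u v; simp
    rw [this, hR_smul]; simp
  rw [hRM] at h2
  linarith

/-- Restricted strong convexity of the Taylor residual of `L_n` at `Θ*`:
`δL_n(Δ, Θ*) ≥ (exp(−2rd)/(2+8rd)) · (1/n) Σ_t ⟨⟨Δ, Φ̄(x^{(t)})⟩⟩²`
whenever `R(Θ*) ≤ r`, `R*(Φ(x)) ≤ d` on `X`, and `Δ ∈ 4Λ`. -/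
theorem taylor_residual_lower_bound (p k1 k2 n : ℕ)
    (X : Set (Fin p → ℝ)) (hXmeas : MeasurableSet X)
    (hXbdd : Bornology.IsBounded X)
    (hvol_pos : 0 < volume X) (hvol_fin : volume X < ⊤)
    (R : Matrix (Fin k1) (Fin k2) ℝ → ℝ)
    (hR_nonneg : ∀ M, 0 ≤ R M)
    (hR_add : ∀ M N, R (M + N) ≤ R M + R N)
    (hR_smul : ∀ (c : ℝ) (M), R (c • M) = |c| * R M)
    (hR_eq_zero : ∀ M, R M = 0 → M = 0)
    (Φ : (Fin p → ℝ) → Matrix (Fin k1) (Fin k2) ℝ)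
    (hΦmeas : ∀ u v, Measurable fun x => Φ x u v)
    (hΦint : ∀ u v, IntegrableOn (fun x => Φ x u v) X volume)
    (r d : ℝ) (hd : 0 ≤ d)
    (Θstar : Matrix (Fin k1) (Fin k2) ℝ) (hΘstar : R Θstar ≤ r)
    (hΦdual : ∀ x ∈ X, dualNorm R (Φ x) ≤ d)
    (xs : Fin n → (Fin p → ℝ)) (hxs : ∀ t, xs t ∈ X)
    (Δ : Matrix (Fin k1) (Fin k2) ℝ) (hΔ : R Δ ≤ 4 * r) :
    empLoss X Φ xs (Θstar + Δ) - empLoss X Φ xs Θstar -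
        (∑ u : Fin k1, ∑ v : Fin k2,
          (-(n : ℝ)⁻¹ * ∑ t : Fin n,
              (Φ (xs t) u v - uniformMean X Φ u v) *
                Real.exp (-(frobInner Θstar (Φ (xs t) - uniformMean X Φ)))) *
            Δ u v) ≥
      (Real.exp (-(2 * r * d)) / (2 + 8 * r * d)) *
        ((n : ℝ)⁻¹ * ∑ t : Fin n,
          (frobInner Δ (Φ (xs t) - uniformMean X Φ)) ^ 2) := by
  have hr : 0 ≤ r := le_trans (hR_nonneg Θstar) hΘstar
  have hvolR : 0 < (volume X).toReal := ENNReal.toReal_pos (ne_of_gt hvol_pos) (ne_of_lt hvol_fin)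
  haveI : IsFiniteMeasure (volume.restrict X) :=
    ⟨by rw [Measure.restrict_apply_univ]; exact hvol_fin⟩
  -- pairing with d on X
  have hpd : ∀ x ∈ X, ∀ M : Matrix (Fin k1) (Fin k2) ℝ, |frobInner M (Φ x)| ≤ R M * d := by
    intro x hx M
    calc |frobInner M (Φ x)| ≤ R M * dualNorm R (Φ x) :=
          abs_frobInner_le_dual R hR_nonneg hR_add hR_smul hR_eq_zero M (Φ x)
      _ ≤ R M * d := mul_le_mul_of_nonneg_left (hΦdual x hx) (hR_nonneg M)
  -- bound for the mean
  have hmean : ∀ M : Matrix (Fin k1) (Fin k2) ℝ, |frobInner M (uniformMean X Φ)| ≤ R M * d := by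
    intro M
    have hint : ∀ u : Fin k1, ∀ v : Fin k2,
        Integrable (fun y => M u v * Φ y u v) (volume.restrict X) :=
      fun u v => (hΦint u v).const_mul _
    have hrepr : frobInner M (uniformMean X Φ)
        = (volume X).toReal⁻¹ * ∫ y in X, frobInner M (Φ y) := by
      have h1 : ∫ y in X, frobInner M (Φ y)
          = ∑ u : Fin k1, ∑ v : Fin k2, M u v * ∫ y in X, Φ y u v := by
        have e1 : (∫ y in X, frobInner M (Φ y))
            = ∑ u : Fin k1, ∫ y in X, ∑ v : Fin k2, M u v * Φ y u v := by
          rw [← integral_finset_sum _ (fun u (_ : u ∈ Finset.univ) =>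
            integrable_finset_sum (μ := volume.restrict X) Finset.univ fun v _ => hint u v)]
          rfl
        rw [e1]
        refine Finset.sum_congr rfl fun u _ => ?_
        rw [integral_finset_sum _ (fun v _ => hint u v)]
        exact Finset.sum_congr rfl fun v _ => MeasureTheory.integral_const_mul _ _
      rw [h1, frobInner, Finset.mul_sum]
      refine Finset.sum_congr rfl fun u _ => ?_
      rw [Finset.mul_sum]
      refine Finset.sum_congr rfl fun v _ => ?_
      show M u v * ((volume X).toReal⁻¹ * ∫ y in X, Φ y u v) = _
      ring
    rw [hrepr]
    have hae : ∀ᵐ y ∂(volume.restrict X), ‖frobInner M (Φ y)‖ ≤ R M * d := by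
      rw [ae_restrict_iff' hXmeas]
      exact ae_of_all _ fun y hy => by simpa [Real.norm_eq_abs] using hpd y hy M
    have hib := norm_integral_le_of_norm_le_const hae
    rw [Measure.real, Measure.restrict_apply_univ] at hib
    rw [abs_mul, abs_of_nonneg (inv_nonneg.2 hvolR.le)]
    rw [Real.norm_eq_abs] at hib
    calc (volume X).toReal⁻¹ * |∫ y in X, frobInner M (Φ y)|
        ≤ (volume X).toReal⁻¹ * (R M * d * (volume X).toReal) :=
          mul_le_mul_of_nonneg_left hib (inv_nonneg.2 hvolR.le)
      _ = R M * d := by field_simp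
  -- bound for centered statistic
  have hw : ∀ (t : Fin n) (M : Matrix (Fin k1) (Fin k2) ℝ),
      |frobInner M (Φ (xs t) - uniformMean X Φ)| ≤ R M * (2 * d) := by
    intro t M
    rw [frobInner_sub_right]
    calc |frobInner M (Φ (xs t)) - frobInner M (uniformMean X Φ)|
        ≤ |frobInner M (Φ (xs t))| + |frobInner M (uniformMean X Φ)| := abs_sub _ _
      _ ≤ R M * d + R M * d := add_le_add (hpd _ (hxs t) M) (hmean M)
      _ = R M * (2 * d) := by ring
  have hsb : ∀ t : Fin n, |frobInner Θstar (Φ (xs t) - uniformMean X Φ)| ≤ 2 * r * d := by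
    intro t
    calc |frobInner Θstar (Φ (xs t) - uniformMean X Φ)| ≤ R Θstar * (2 * d) := hw t Θstar
      _ ≤ r * (2 * d) := mul_le_mul_of_nonneg_right hΘstar (by linarith)
      _ = 2 * r * d := by ring
  have hzb : ∀ t : Fin n, |frobInner Δ (Φ (xs t) - uniformMean X Φ)| ≤ 8 * r * d := by
    intro t
    calc |frobInner Δ (Φ (xs t) - uniformMean X Φ)| ≤ R Δ * (2 * d) := hw t Δ
      _ ≤ (4 * r) * (2 * d) := mul_le_mul_of_nonneg_right hΔ (by linarith)
      _ = 8 * r * d := by ring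
  -- abbreviations
  set w : Fin n → Matrix (Fin k1) (Fin k2) ℝ := fun t => Φ (xs t) - uniformMean X Φ with hwdef
  set E : Fin n → ℝ := fun t => Real.exp (-(frobInner Θstar (w t))) with hEdef
  set z : Fin n → ℝ := fun t => frobInner Δ (w t) with hzdef
  -- the key algebraic identity
  have hkey : empLoss X Φ xs (Θstar + Δ) - empLoss X Φ xs Θstar -
        (∑ u : Fin k1, ∑ v : Fin k2,
          (-(n : ℝ)⁻¹ * ∑ t : Fin n,
              (Φ (xs t) u v - uniformMean X Φ u v) *
                Real.exp (-(frobInner Θstar (Φ (xs t) - uniformMean X Φ)))) *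
            Δ u v)
      = (n : ℝ)⁻¹ * ∑ t : Fin n, E t * (Real.exp (-(z t)) - 1 + z t) := by
    have hG : (∑ u : Fin k1, ∑ v : Fin k2,
          (-(n : ℝ)⁻¹ * ∑ t : Fin n,
              (Φ (xs t) u v - uniformMean X Φ u v) *
                Real.exp (-(frobInner Θstar (Φ (xs t) - uniformMean X Φ)))) *
            Δ u v)
        = -((n : ℝ)⁻¹ * ∑ t : Fin n, E t * z t) := by
      have step1 : ∀ (u : Fin k1) (v : Fin k2),
          (-(n : ℝ)⁻¹ * ∑ t : Fin n,
              (Φ (xs t) u v - uniformMean X Φ u v) *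
                Real.exp (-(frobInner Θstar (Φ (xs t) - uniformMean X Φ)))) * Δ u v
          = ∑ t : Fin n, -((n : ℝ)⁻¹ * (E t * (w t u v * Δ u v))) := by
        intro u v
        rw [Finset.mul_sum, Finset.sum_mul]
        refine Finset.sum_congr rfl fun t _ => ?_
        have hwt : w t u v = Φ (xs t) u v - uniformMean X Φ u v := rfl
        rw [hwt]
        show -(n : ℝ)⁻¹ * ((Φ (xs t) u v - uniformMean X Φ u v) * E t) * Δ u v = _
        ring
      calc (∑ u : Fin k1, ∑ v : Fin k2,
          (-(n : ℝ)⁻¹ * ∑ t : Fin n,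
              (Φ (xs t) u v - uniformMean X Φ u v) *
                Real.exp (-(frobInner Θstar (Φ (xs t) - uniformMean X Φ)))) * Δ u v)
          = ∑ u : Fin k1, ∑ v : Fin k2, ∑ t : Fin n,
              -((n : ℝ)⁻¹ * (E t * (w t u v * Δ u v))) := by
            exact Finset.sum_congr rfl fun u _ => Finset.sum_congr rfl fun v _ => step1 u v
        _ = ∑ u : Fin k1, ∑ t : Fin n, ∑ v : Fin k2,
              -((n : ℝ)⁻¹ * (E t * (w t u v * Δ u v))) :=
            Finset.sum_congr rfl fun u _ => Finset.sum_comm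
        _ = ∑ t : Fin n, ∑ u : Fin k1, ∑ v : Fin k2,
              -((n : ℝ)⁻¹ * (E t * (w t u v * Δ u v))) := Finset.sum_comm
        _ = -((n : ℝ)⁻¹ * ∑ t : Fin n, E t * z t) := by
            rw [Finset.mul_sum, ← Finset.sum_neg_distrib]
            refine Finset.sum_congr rfl fun t _ => ?_
            have hzt : z t = ∑ u : Fin k1, ∑ v : Fin k2, Δ u v * w t u v := rfl
            rw [hzt, Finset.mul_sum, Finset.mul_sum, ← Finset.sum_neg_distrib]
            refine Finset.sum_congr rfl fun u _ => ?_
            rw [Finset.mul_sum, Finset.mul_sum, ← Finset.sum_neg_distrib]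
            exact Finset.sum_congr rfl fun v _ => by ring
    rw [hG]
    show (n : ℝ)⁻¹ * (∑ t : Fin n, Real.exp (-(frobInner (Θstar + Δ) (w t))))
        - (n : ℝ)⁻¹ * (∑ t : Fin n, E t)
        - -((n : ℝ)⁻¹ * ∑ t : Fin n, E t * z t) = _
    have hterm : ∀ t : Fin n, Real.exp (-(frobInner (Θstar + Δ) (w t)))
        = E t * Real.exp (-(z t)) := by
      intro t
      rw [frobInner_add_left, neg_add, Real.exp_add]
    rw [Finset.sum_congr rfl fun t _ => hterm t]
    have hsplit : ∑ t : Fin n, E t * (Real.exp (-(z t)) - 1 + z t)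
        = (∑ t : Fin n, E t * Real.exp (-(z t))) - (∑ t : Fin n, E t)
          + ∑ t : Fin n, E t * z t := by
      rw [← Finset.sum_sub_distrib, ← Finset.sum_add_distrib]
      exact Finset.sum_congr rfl fun t _ => by ring
    rw [hsplit]
    ring
  rw [ge_iff_le, hkey]
  have hD : (0:ℝ) < 2 + 8 * r * d := by positivity
  have hrhs : (Real.exp (-(2 * r * d)) / (2 + 8 * r * d)) *
        ((n : ℝ)⁻¹ * ∑ t : Fin n, (frobInner Δ (Φ (xs t) - uniformMean X Φ)) ^ 2)
      = (n : ℝ)⁻¹ * ∑ t : Fin n,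
          (Real.exp (-(2 * r * d)) / (2 + 8 * r * d)) * (z t) ^ 2 := by
    rw [show (Real.exp (-(2 * r * d)) / (2 + 8 * r * d)) *
        ((n : ℝ)⁻¹ * ∑ t : Fin n, (frobInner Δ (Φ (xs t) - uniformMean X Φ)) ^ 2)
      = (n : ℝ)⁻¹ * ((Real.exp (-(2 * r * d)) / (2 + 8 * r * d)) *
          ∑ t : Fin n, (frobInner Δ (Φ (xs t) - uniformMean X Φ)) ^ 2) from by ring,
      Finset.mul_sum]
  rw [hrhs]
  refine mul_le_mul_of_nonneg_left ?_ (by positivity)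
  refine Finset.sum_le_sum fun t _ => ?_
  -- per-term bound
  have h1 : (z t)^2 / (2 + |z t|) ≤ Real.exp (-(z t)) - 1 + z t := exp_taylor_residual_lb (z t)
  have h2 : (z t)^2 / (2 + 8 * r * d) ≤ (z t)^2 / (2 + |z t|) := by
    apply div_le_div_of_nonneg_left (sq_nonneg _) (by positivity)
    linarith [hzb t]
  have h3 : Real.exp (-(2 * r * d)) ≤ E t := by
    rw [hEdef]
    apply Real.exp_le_exp.2
    apply neg_le_neg
    exact le_trans (le_abs_self _) (hsb t)
  have h4 : 0 ≤ Real.exp (-(z t)) - 1 + z t := le_trans (by positivity) h1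
  calc Real.exp (-(2 * r * d)) / (2 + 8 * r * d) * (z t) ^ 2
      = Real.exp (-(2 * r * d)) * ((z t)^2 / (2 + 8 * r * d)) := by ring
    _ ≤ Real.exp (-(2 * r * d)) * (Real.exp (-(z t)) - 1 + z t) := by
        apply mul_le_mul_of_nonneg_left (le_trans h2 h1) (Real.exp_nonneg _)
    _ ≤ E t * (Real.exp (-(z t)) - 1 + z t) := mul_le_mul_of_nonneg_right h3 h4
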